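/- arXiv:2201.10330 — 3 statements merged into one kernel-verified Lean document; each statement's English description precedes it below -/
import Mathlib

section
/- Let f be a symmetric bilinear form on a finite-dimensional real vector space V with radical A, and let K be a subspace of V. If H is a hyperplane of V containing the polar K^⊥, then there exists a vector x ∈ K \ A such that H^⊥ = A + span{x}, and consequently the polar of span{x} equals H. -/
/-!
Write `A = B^⊥(⊤)` for the radical. For a reflexive form on a finite-dimensional space,
`dim W + dim W^⊥ = dim V + dim A` whenever `A ≤ W`, and `W^⊥⊥ = W ⊔ A` for every `W`. A hyperplane
`H ⊇ K^⊥ ⊇ A` therefore has `dim H^⊥ = dim A + 1`, and `H^⊥ ≤ K^⊥⊥ = K ⊔ A`; the `K`-component `x`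
of any `y ∈ H^⊥ \ A` lies in `H^⊥ \ A`, so `H^⊥ = A ⊔ span {x}`. Finally `H ≤ (span {x})^⊥`, and
both are hyperplanes because `span {x} ⊓ A = ⊥`.
-/

open LinearMap (BilinForm)
open Submodule Module

namespace LinearMap.BilinForm

variable {𝕜 V : Type*} [Field 𝕜] [AddCommGroup V] [Module 𝕜 V] [FiniteDimensional 𝕜 V]
  {B : BilinForm 𝕜 V}

theorem finrank_add_finrank_orthogonal_of_orthogonal_top_le (hB : B.IsRefl)
    {W : Submodule 𝕜 V} (hW : B.orthogonal ⊤ ≤ W) :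
    finrank 𝕜 W + finrank 𝕜 (B.orthogonal W) = finrank 𝕜 V + finrank 𝕜 (B.orthogonal ⊤) := by
  rw [finrank_add_finrank_orthogonal hB, inf_eq_right.mpr hW]

theorem orthogonal_orthogonal_eq_sup_orthogonal_top (hB : B.IsRefl) (W : Submodule 𝕜 V) :
    B.orthogonal (B.orthogonal W) = W ⊔ B.orthogonal ⊤ := by
  refine (eq_of_le_of_finrank_le
    (sup_le (le_orthogonal_orthogonal hB) (orthogonal_le le_top)) ?_).symm
  have hW := finrank_add_finrank_orthogonal hB W
  have hWperp := finrank_add_finrank_orthogonal_of_orthogonal_top_le hB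
    (orthogonal_le (le_top : W ≤ ⊤))
  have hsup := finrank_sup_add_finrank_inf_eq W (B.orthogonal ⊤)
  omega

theorem finrank_orthogonal_of_finrank_add_one (hB : B.IsRefl) {H : Submodule 𝕜 V}
    (hH : finrank 𝕜 H + 1 = finrank 𝕜 V) (hrad : B.orthogonal ⊤ ≤ H) :
    finrank 𝕜 (B.orthogonal H) = finrank 𝕜 (B.orthogonal ⊤) + 1 := by
  have := finrank_add_finrank_orthogonal_of_orthogonal_top_le hB hrad
  omega

theorem finrank_orthogonal_span_singleton_add_one (hB : B.IsRefl) {x : V}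
    (hx : x ∉ B.orthogonal ⊤) :
    finrank 𝕜 (B.orthogonal (𝕜 ∙ x)) + 1 = finrank 𝕜 V := by
  have hx0 : x ≠ 0 := by
    rintro rfl
    exact hx (zero_mem _)
  have h := finrank_add_finrank_orthogonal hB (𝕜 ∙ x)
  rw [(disjoint_span_singleton_of_notMem hx).symm.eq_bot, finrank_bot,
    finrank_span_singleton hx0] at h
  omega

theorem exists_mem_orthogonal_notMem_orthogonal_top (hB : B.IsRefl) {W H : Submodule 𝕜 V}
    (hWH : B.orthogonal W ≤ H) (hH : finrank 𝕜 H + 1 = finrank 𝕜 V) :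
    ∃ x ∈ W, x ∈ B.orthogonal H ∧ x ∉ B.orthogonal ⊤ := by
  have hrad : B.orthogonal ⊤ ≤ H := (orthogonal_le le_top).trans hWH
  have hlt : B.orthogonal ⊤ < B.orthogonal H := by
    refine lt_of_le_of_ne (orthogonal_le le_top) fun h => ?_
    have := finrank_orthogonal_of_finrank_add_one hB hH hrad
    rw [← h] at this
    omega
  obtain ⟨y, hyH, hyrad⟩ := SetLike.exists_of_lt hlt
  have hy : y ∈ W ⊔ B.orthogonal ⊤ :=
    orthogonal_orthogonal_eq_sup_orthogonal_top hB W ▸ orthogonal_le hWH hyH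
  obtain ⟨x, hxW, a, ha, rfl⟩ := mem_sup.mp hy
  exact ⟨x, hxW, (add_mem_cancel_right (orthogonal_le le_top ha)).mp hyH,
    fun hx => hyrad (add_mem hx ha)⟩

theorem orthogonal_eq_orthogonal_top_sup_span_singleton (hB : B.IsRefl) {H : Submodule 𝕜 V}
    (hH : finrank 𝕜 H + 1 = finrank 𝕜 V) (hrad : B.orthogonal ⊤ ≤ H) {x : V}
    (hxH : x ∈ B.orthogonal H) (hx : x ∉ B.orthogonal ⊤) :
    B.orthogonal H = B.orthogonal ⊤ ⊔ 𝕜 ∙ x := by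
  refine (eq_of_le_of_finrank_le
    (sup_le (orthogonal_le le_top) (span_singleton_le_iff_mem x _ |>.mpr hxH)) ?_).symm
  rw [finrank_sup_span_singleton hx, finrank_orthogonal_of_finrank_add_one hB hH hrad]

theorem orthogonal_span_singleton_eq (hB : B.IsRefl) {H : Submodule 𝕜 V}
    (hH : finrank 𝕜 H + 1 = finrank 𝕜 V) {x : V}
    (hxH : x ∈ B.orthogonal H) (hx : x ∉ B.orthogonal ⊤) :
    B.orthogonal (𝕜 ∙ x) = H := by
  refine (eq_of_le_of_finrank_le ((le_orthogonal_orthogonal hB).trans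
    (orthogonal_le (span_singleton_le_iff_mem x _ |>.mpr hxH))) ?_).symm
  have := finrank_orthogonal_span_singleton_add_one hB hx
  omega

end LinearMap.BilinForm

open LinearMap.BilinForm

theorem stmt1_general {V : Type*} [AddCommGroup V] [Module ℝ V] [FiniteDimensional ℝ V]
    (B : BilinForm ℝ V) (hsymm : B.IsSymm)
    (A : Submodule ℝ V) (hA : A = B.orthogonal ⊤)
    (K : Submodule ℝ V)
    (H : Submodule ℝ V) (hH : finrank ℝ H + 1 = finrank ℝ V)
    (hKH : B.orthogonal K ≤ H) :
    ∃ x : V, x ∈ K ∧ x ∉ A ∧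
      B.orthogonal H = A ⊔ (Submodule.span ℝ {x}) ∧
      B.orthogonal (Submodule.span ℝ {x}) = H := by
  subst hA
  have hB : B.IsRefl := hsymm.isRefl
  obtain ⟨x, hxK, hxH, hx⟩ := exists_mem_orthogonal_notMem_orthogonal_top hB hKH hH
  have hrad : B.orthogonal ⊤ ≤ H := (B.orthogonal_le le_top).trans hKH
  exact ⟨x, hxK, hx, orthogonal_eq_orthogonal_top_sup_span_singleton hB hH hrad hxH hx,
    orthogonal_span_singleton_eq hB hH hxH hx⟩

/-- If `H` is a hyperplane of `V` containing the polar `K^⊥` of a subspace `K` (with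
respect to a nonzero symmetric bilinear form `B` with radical `A`), then there exists
`x ∈ K \ A` with `H^⊥ = A ⊔ span {x}`, and consequently `(span {x})^⊥ = H`. -/
theorem stmt1 {V : Type*} [AddCommGroup V] [Module ℝ V] [FiniteDimensional ℝ V]
    (B : BilinForm ℝ V) (hB : B ≠ 0) (hsymm : B.IsSymm)
    (A : Submodule ℝ V) (hA : A = B.orthogonal ⊤)
    (K : Submodule ℝ V)
    (H : Submodule ℝ V) (hH : finrank ℝ H + 1 = finrank ℝ V)
    (hKH : B.orthogonal K ≤ H) :
    ∃ x : V, x ∈ K ∧ x ∉ A ∧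
      B.orthogonal H = A ⊔ (Submodule.span ℝ {x}) ∧
      B.orthogonal (Submodule.span ℝ {x}) = H :=
  stmt1_general B hsymm A hA K H hH hKH
end

section
/- Let f be a symmetric bilinear form on a finite-dimensional real vector space V with radical A, and let K be a subspace. Suppose H₁,…,H_m are hyperplanes of V containing K^⊥ whose corresponding linear functionals are linearly independent, and suppose H_i^⊥ = A + span{x_i} with x_i ∈ K \ A for each i. Then for any linearly independent subset {y₁,…,y_r} of A, the set {x₁,…,x_m, y₁,…,y_r} is linearly independent. -/
/-!
Each `x i` lies in the polar of `H i = ker (φ i)`, so the functional `B.flip (x i) = B · (x i)`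
vanishes on `ker (φ i)` and is therefore a multiple of `φ i`, a nonzero one because `x i` is not
in the radical `ker B.flip`. So `B.flip` sends the `x i` to a linearly independent family and
kills every `y j`, which forces any linear relation among the `x i` and `y j` to be trivial.
-/

open LinearMap (BilinForm)
open Submodule Module

theorem LinearIndependent.sum_elim_of_comp_of_forall_mem_ker {ι κ R M N : Type*} [Ring R]
    [AddCommGroup M] [Module R M] [AddCommGroup N] [Module R N] {f : M →ₗ[R] N}
    {x : ι → M} {y : κ → M} (hx : LinearIndependent R (f ∘ x)) (hy : LinearIndependent R y)
    (hyf : ∀ j, y j ∈ LinearMap.ker f) : LinearIndependent R (Sum.elim x y) :=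
  hx.of_comp.sum_type hy <| (Submodule.range_ker_disjoint hx).mono_right <|
    span_le.mpr <| Set.range_subset_iff.mpr hyf

theorem Module.Dual.linearIndependent_of_ker_le_ker {ι K V : Type*} [Field K] [AddCommGroup V]
    [Module K V] {φ ψ : ι → Dual K V} (hφ : LinearIndependent K φ) (hψ : ∀ i, ψ i ≠ 0)
    (hker : ∀ i, LinearMap.ker (φ i) ≤ LinearMap.ker (ψ i)) : LinearIndependent K ψ := by
  have hspan i : ψ i ∈ K ∙ φ i := by
    simpa using mem_span_of_iInf_ker_le_ker (L := fun _ : Unit => φ i) (by simpa using hker i)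
  choose c hc using fun i => mem_span_singleton.mp (hspan i)
  have hc0 i : c i ≠ 0 := by
    intro h
    exact hψ i (by rw [← hc i, h, zero_smul])
  convert hφ.units_smul fun i => Units.mk0 (c i) (hc0 i)
  exact funext fun i => (hc i).symm

namespace LinearMap.BilinForm

variable {R M : Type*} [CommRing R] [AddCommGroup M] [Module R M]

theorem orthogonal_top_eq_ker_flip (B : BilinForm R M) :
    B.orthogonal ⊤ = LinearMap.ker B.flip := by
  ext
  simp [LinearMap.ext_iff]

theorem mem_orthogonal_iff_le_ker_flip (B : BilinForm R M) {N : Submodule R M} {m : M} :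
    m ∈ B.orthogonal N ↔ N ≤ LinearMap.ker (B.flip m) :=
  Iff.rfl

end LinearMap.BilinForm

theorem stmt2_general {V : Type*} [AddCommGroup V] [Module ℝ V]
    (B : BilinForm ℝ V)
    (A : Submodule ℝ V) (hA : A = B.orthogonal ⊤)
    {m r : ℕ}
    (φ : Fin m → (V →ₗ[ℝ] ℝ)) (hφ : LinearIndependent ℝ φ)
    (H : Fin m → Submodule ℝ V) (hHdef : ∀ i, H i = LinearMap.ker (φ i))
    (x : Fin m → V) (hxA : ∀ i, x i ∉ A)
    (hHp : ∀ i, B.orthogonal (H i) = A ⊔ Submodule.span ℝ {x i})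
    (y : Fin r → V) (hyA : ∀ j, y j ∈ A) (hy : LinearIndependent ℝ y) :
    LinearIndependent ℝ (Sum.elim x y) := by
  have hker i : LinearMap.ker (φ i) ≤ LinearMap.ker (B.flip (x i)) := by
    rw [← hHdef i, ← B.mem_orthogonal_iff_le_ker_flip, hHp i]
    exact mem_sup_right (mem_span_singleton_self _)
  rw [hA, B.orthogonal_top_eq_ker_flip] at hxA hyA
  exact .sum_elim_of_comp_of_forall_mem_ker
    (Dual.linearIndependent_of_ker_le_ker hφ (fun i => mt LinearMap.mem_ker.mpr (hxA i)) hker)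
    hy hyA

/-- Let `H i = ker (φ i)` (for `i : Fin m`) be hyperplanes containing `K^⊥`, with
linearly independent defining functionals `φ i`, and suppose the polar of each `H i`
is `A ⊔ span {x i}` with `x i ∈ K \ A`.  Then for any linearly independent family
`y : Fin r → V` of vectors of the radical `A`, the combined family
`x₁,…,x_m, y₁,…,y_r` is linearly independent. -/
theorem stmt2 {V : Type*} [AddCommGroup V] [Module ℝ V] [FiniteDimensional ℝ V]
    (B : BilinForm ℝ V) (hB : B ≠ 0) (hsymm : B.IsSymm)
    (A : Submodule ℝ V) (hA : A = B.orthogonal ⊤)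
    (K : Submodule ℝ V) {m r : ℕ}
    (φ : Fin m → (V →ₗ[ℝ] ℝ)) (hφ : LinearIndependent ℝ φ)
    (H : Fin m → Submodule ℝ V) (hHdef : ∀ i, H i = LinearMap.ker (φ i))
    (hKH : ∀ i, B.orthogonal K ≤ H i)
    (x : Fin m → V) (hxK : ∀ i, x i ∈ K) (hxA : ∀ i, x i ∉ A)
    (hHp : ∀ i, B.orthogonal (H i) = A ⊔ Submodule.span ℝ {x i})
    (y : Fin r → V) (hyA : ∀ j, y j ∈ A) (hy : LinearIndependent ℝ y) :
    LinearIndependent ℝ (Sum.elim x y) :=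
  stmt2_general B A hA φ hφ H hHdef x hxA hHp y hyA hy
end

section
/- Every isometry of a nondegenerate symmetric bilinear form f on an (n+1)-dimensional real vector space V is a product of at most n+1 reflections in anisotropic vectors (Cartan–Dieudonné for real quadratic spaces): there exist anisotropic vectors w₁,…,w_m, m ≤ n+1, such that g = s_{w₁} ∘ ⋯ ∘ s_{w_m}. -/
open LinearMap (BilinForm)
open Module

/-- The reflection in the hyperplane orthogonal to an anisotropic vector `w`. -/
noncomputable def reflVec {V : Type*} [AddCommGroup V] [Module ℝ V]
    (B : LinearMap.BilinForm ℝ V) (w : V) : V → V :=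
  fun v => v - (2 * B v w / B w w) • w

/-!
Induction on the dimension. If an isometry `g` fixes an anisotropic vector `v`, it restricts to
an isometry of the nondegenerate hyperplane `v^⊥`. If some anisotropic `v` has `g v - v`
anisotropic, the reflection in `g v - v` maps `g v` back to `v`, which costs one reflection.
In the remaining, exceptional, case `g v - v` is isotropic for every anisotropic `v`, hence (by
Zariski density of the anisotropic vectors) for every `v`: the range of `N = g - 1` is totally
isotropic, and `range N ⊆ (range N)^⊥ = ker N` gives `N² = 0`, so `det g = 1`. Since `g` fixes
no anisotropic vector, `ker N` is totally isotropic too, so `ker N = range N` and `dim V` is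
even. For any anisotropic `u`, `s_u g` has determinant `-1`, so it is not exceptional and is a
product of at most `dim V` reflections; their number is odd, hence at most `dim V - 1`.
-/

namespace LinearMap

lemma det_one_add_of_isNilpotent {R M : Type*} [CommRing R] [IsDomain R] [AddCommGroup M]
    [Module R M] [Module.Free R M] [Module.Finite R M] {N : Module.End R M} (hN : IsNilpotent N) :
    (1 + N).det = 1 := by
  have := eval_charpoly (-N) 1
  rw [hN.neg.charpoly_eq_X_pow_finrank] at this
  simpa using this.symm

end LinearMap

namespace LinearMap.BilinForm

variable {K V : Type*} [Field K] [AddCommGroup V] [Module K V] {B : BilinForm K V} {v w : V}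

variable (B) in
noncomputable def reflection (w : V) : Module.End K V :=
  Module.preReflection w ((2 / B w w) • B.flip w)

variable (B) in
lemma reflection_apply (w v : V) : B.reflection w v = v - (2 * B v w / B w w) • w := by
  simp [reflection, Module.preReflection_apply, div_mul_eq_mul_div]

lemma two_div_smul_flip_apply_self (hw : B w w ≠ 0) : ((2 / B w w) • B.flip w) w = 2 := by
  simp [hw]

lemma reflection_apply_of_eq_zero (h : B v w = 0) : B.reflection w v = v := by
  simp [reflection_apply, h]

lemma reflection_mul_self (hw : B w w ≠ 0) : B.reflection w * B.reflection w = 1 :=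
  LinearMap.ext (Module.involutive_preReflection (two_div_smul_flip_apply_self hw))

lemma isOrthogonal_reflection (hB : B.IsSymm) (hw : B w w ≠ 0) :
    B.IsOrthogonal (B.reflection w) := by
  intro x y
  simp only [reflection_apply, map_sub, map_smul, LinearMap.sub_apply, LinearMap.smul_apply,
    smul_eq_mul, hB.eq w y]
  field_simp
  ring

lemma det_reflection [FiniteDimensional K V] (hw : B w w ≠ 0) : (B.reflection w).det = -1 := by
  have : B.reflection w = LinearMap.transvection (-((2 / B w w) • B.flip w)) w := by
    ext x
    simp [reflection, Module.preReflection_apply, LinearMap.transvection.apply, sub_eq_add_neg]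
  rw [this, LinearMap.transvection.det, LinearMap.neg_apply, two_div_smul_flip_apply_self hw]
  norm_num

lemma reflection_sub_apply {a b : V} (hB : B.IsSymm) (hab : B a a = B b b)
    (hw : B (a - b) (a - b) ≠ 0) : B.reflection (a - b) a = b := by
  have : 2 * B a (a - b) = B (a - b) (a - b) := by
    simp only [map_sub, LinearMap.sub_apply, hB.eq b a]
    linear_combination hab
  rw [reflection_apply, this, div_self hw, one_smul, sub_sub_cancel]

variable (B) in
def IsProdOfReflections (m : ℕ) (g : Module.End K V) : Prop :=
  ∃ ws : List V, ws.length ≤ m ∧ (∀ w ∈ ws, B w w ≠ 0) ∧ g = (ws.map B.reflection).prod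

lemma isProdOfReflections_one (m : ℕ) : B.IsProdOfReflections m 1 :=
  ⟨[], by simp, by simp, by simp⟩

lemma IsProdOfReflections.mono {m m' : ℕ} {g : Module.End K V} (h : B.IsProdOfReflections m g)
    (hm : m ≤ m') : B.IsProdOfReflections m' g :=
  let ⟨ws, hlen, hws, hg⟩ := h
  ⟨ws, hlen.trans hm, hws, hg⟩

lemma IsProdOfReflections.of_reflection_mul {m : ℕ} {g : Module.End K V} (hw : B w w ≠ 0)
    (h : B.IsProdOfReflections m (B.reflection w * g)) : B.IsProdOfReflections (m + 1) g := by
  obtain ⟨ws, hlen, hws, hg⟩ := h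
  refine ⟨w :: ws, by simpa using hlen, ?_, ?_⟩
  · simpa [hw] using hws
  · rw [List.map_cons, List.prod_cons, ← hg, ← mul_assoc, reflection_mul_self hw, one_mul]

lemma det_list_prod_reflection [FiniteDimensional K V] {ws : List V}
    (hws : ∀ w ∈ ws, B w w ≠ 0) : (ws.map B.reflection).prod.det = (-1) ^ ws.length := by
  induction ws with
  | nil => simp
  | cons w ws ih =>
    simp only [List.forall_mem_cons] at hws
    simp [det_reflection hws.1, ih hws.2, pow_succ, mul_comm]

lemma list_prod_reflection_apply_of_forall_eq_zero {ws : List V} (h : ∀ w ∈ ws, B v w = 0) :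
    (ws.map B.reflection).prod v = v := by
  induction ws with
  | nil => simp
  | cons w ws ih =>
    simp only [List.forall_mem_cons] at h
    simp [ih h.2, reflection_apply_of_eq_zero h.1]

lemma list_prod_reflection_restrict_apply {W : Submodule K V} (ws : List W) (x : W) :
    (((ws.map (B.restrict W).reflection).prod x : W) : V) =
      ((ws.map Subtype.val).map B.reflection).prod x := by
  induction ws with
  | nil => simp
  | cons w ws ih => simp [ih, reflection_apply]

lemma apply_mem_orthogonal_span_singleton {g : Module.End K V} (hg : B.IsOrthogonal g)
    (hgv : g v = v) {x : V} (hx : x ∈ B.orthogonal (K ∙ v)) : g x ∈ B.orthogonal (K ∙ v) := by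
  rw [mem_orthogonal_iff] at hx ⊢
  intro y hy
  obtain ⟨c, rfl⟩ := Submodule.mem_span_singleton.mp hy
  have := hx _ hy
  simp only [map_smul, LinearMap.smul_apply, smul_eq_mul] at this ⊢
  rw [← hgv, hg, this]

lemma IsProdOfReflections.of_restrict_orthogonal {m : ℕ} {g : Module.End K V}
    (hg : B.IsOrthogonal g) (hv : B v v ≠ 0) (hgv : g v = v)
    (h : (B.restrict (B.orthogonal (K ∙ v))).IsProdOfReflections m
      (g.restrict fun _ ↦ apply_mem_orthogonal_span_singleton hg hgv)) :
    B.IsProdOfReflections m g := by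
  obtain ⟨ws, hlen, hws, hg'⟩ := h
  refine ⟨ws.map Subtype.val, by simpa using hlen, by simpa using hws, ?_⟩
  refine LinearMap.ext_on_codisjoint (isCompl_span_singleton_orthogonal hv).codisjoint ?_ ?_
  · intro x hx
    obtain ⟨c, rfl⟩ := Submodule.mem_span_singleton.mp hx
    rw [map_smul, map_smul, hgv, list_prod_reflection_apply_of_forall_eq_zero]
    simp only [List.mem_map, forall_exists_index, and_imp, forall_apply_eq_imp_iff₂]
    exact fun w _ ↦ (mem_orthogonal_iff.mp w.2) v (Submodule.mem_span_singleton_self v)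
  · intro x hx
    rw [← list_prod_reflection_restrict_apply ws ⟨x, hx⟩, ← hg']
    rfl

lemma le_orthogonal_self_of_forall_apply_self_eq_zero [NeZero (2 : K)] (hB : B.IsSymm)
    {S : Submodule K V} (h : ∀ x ∈ S, B x x = 0) : S ≤ B.orthogonal S := by
  intro y hy
  rw [mem_orthogonal_iff]
  intro x hx
  rw [hB.polarization, h _ (S.add_mem hx hy), h x hx, h y hy]
  simp

lemma apply_add_smul_apply_add_smul (hB : B.IsSymm) (x u : V) (t : K) :
    B (x + t • u) (x + t • u) = B x x + 2 * B x u * t + B u u * t ^ 2 := by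
  simp only [map_add, map_smul, LinearMap.add_apply, LinearMap.smul_apply, smul_eq_mul,
    hB.eq u x]
  ring

open Polynomial in
/-- Anisotropic vectors are Zariski dense once there is one. -/
lemma apply_self_eq_zero_of_forall_anisotropic [Infinite K] {B' : BilinForm K V}
    (hB : B.IsSymm) (hB' : B'.IsSymm) {u : V} (hu : B u u ≠ 0)
    (h : ∀ v, B v v ≠ 0 → B' v v = 0) (x : V) : B' x x = 0 := by
  let along (D : BilinForm K V) : K[X] := C (D x x) + C (2 * D x u) * X + C (D u u) * X ^ 2
  have eval_along {D : BilinForm K V} (hD : D.IsSymm) (t : K) :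
      (along D).eval t = D (x + t • u) (x + t • u) := by
    rw [apply_add_smul_apply_add_smul hD]
    simp [along]
  have hprod : along B * along B' = 0 := by
    refine Polynomial.funext fun t ↦ ?_
    rw [eval_mul, eval_along hB, eval_along hB', eval_zero, mul_eq_zero, or_iff_not_imp_left]
    exact h _
  have hB_ne : along B ≠ 0 := fun h0 ↦ hu <| by
    simpa [along] using congr_arg (coeff · 2) h0
  simpa [along] using congr_arg (eval 0) ((mul_eq_zero.mp hprod).resolve_left hB_ne)

variable (B) in
/-- The exceptional case of the Cartan–Dieudonné induction. -/
def IsExceptional (g : Module.End K V) : Prop :=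
  ∀ v, B v v ≠ 0 → g v ≠ v ∧ B (g v - v) (g v - v) = 0

lemma isProdOfReflections_of_not_isExceptional [FiniteDimensional K V] (hB : B.IsSymm)
    (ih : ∀ v, B v v ≠ 0 → ∀ h : Module.End K (B.orthogonal (K ∙ v)),
      (B.restrict _).IsOrthogonal h → (B.restrict _).IsProdOfReflections (finrank K V - 1) h)
    {g : Module.End K V} (hg : B.IsOrthogonal g) (hex : ¬ B.IsExceptional g) :
    B.IsProdOfReflections (finrank K V) g := by
  have of_fixed {h : Module.End K V} (hh : B.IsOrthogonal h) {v : V} (hv : B v v ≠ 0)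
      (hhv : h v = v) : B.IsProdOfReflections (finrank K V - 1) h :=
    .of_restrict_orthogonal hh hv hhv (ih v hv _ fun x y ↦ hh x y)
  simp only [IsExceptional, not_forall, not_and_or, not_not] at hex
  obtain ⟨v, hv, hfix | hmove⟩ := hex
  · exact (of_fixed hg hv hfix).mono (Nat.sub_le _ _)
  have hpos : 0 < finrank K V :=
    finrank_pos_iff_exists_ne_zero.mpr ⟨v, fun h0 ↦ hv (by simp [h0])⟩
  have hh : B.IsOrthogonal (B.reflection (g v - v) * g) := fun x y ↦ by
    rw [Module.End.mul_apply, Module.End.mul_apply, isOrthogonal_reflection hB hmove, hg]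
  have hhv : (B.reflection (g v - v) * g) v = v := reflection_sub_apply hB (hg v v) hmove
  exact (IsProdOfReflections.of_reflection_mul hmove (of_fixed hh hv hhv)).mono (by omega)

lemma ker_sub_one_eq_orthogonal_range [FiniteDimensional K V] (hnd : B.Nondegenerate)
    {g : Module.End K V} (hg : B.IsOrthogonal g) :
    ker (g - 1) = B.orthogonal (range (g - 1)) := by
  refine Submodule.eq_of_le_of_finrank_le ?_ ?_
  · intro x hx
    rw [mem_ker, LinearMap.sub_apply, Module.End.one_apply, sub_eq_zero] at hx
    rw [mem_orthogonal_iff]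
    rintro _ ⟨y, rfl⟩
    simp only [LinearMap.sub_apply, Module.End.one_apply, map_sub]
    rw [← hx, hg, hx, sub_self]
  · rw [finrank_orthogonal hnd, ← finrank_range_add_finrank_ker (g - 1)]
    omega

variable [Infinite K] [NeZero (2 : K)]

lemma IsExceptional.sub_one_mul_self_eq_zero [FiniteDimensional K V] {g : Module.End K V}
    (hex : B.IsExceptional g) (hB : B.IsSymm) (hnd : B.Nondegenerate) (hg : B.IsOrthogonal g)
    {u : V} (hu : B u u ≠ 0) : (g - 1) * (g - 1) = 0 := by
  have hisotropic (x : V) : B ((g - 1) x) ((g - 1) x) = 0 :=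
    apply_self_eq_zero_of_forall_anisotropic (B' := B.compl₁₂ (g - 1) (g - 1)) hB
      ⟨fun _ _ ↦ hB.eq _ _⟩ hu (fun v hv ↦ by simpa using (hex v hv).2) x
  have hrange : range (g - 1) ≤ B.orthogonal (range (g - 1)) := by
    refine le_orthogonal_self_of_forall_apply_self_eq_zero hB ?_
    rintro _ ⟨x, rfl⟩
    exact hisotropic x
  rw [← ker_sub_one_eq_orthogonal_range hnd hg, range_le_ker_iff] at hrange
  exact hrange

lemma IsExceptional.det_eq_one [FiniteDimensional K V] {g : Module.End K V}
    (hex : B.IsExceptional g) (hB : B.IsSymm) (hnd : B.Nondegenerate) (hg : B.IsOrthogonal g)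
    {u : V} (hu : B u u ≠ 0) : g.det = 1 := by
  have hN : IsNilpotent (g - 1) := ⟨2, by rw [pow_two, hex.sub_one_mul_self_eq_zero hB hnd hg hu]⟩
  simpa using det_one_add_of_isNilpotent hN

lemma IsExceptional.even_finrank [FiniteDimensional K V] {g : Module.End K V}
    (hex : B.IsExceptional g) (hB : B.IsSymm) (hnd : B.Nondegenerate) (hg : B.IsOrthogonal g)
    {u : V} (hu : B u u ≠ 0) : Even (finrank K V) := by
  have hker : ker (g - 1) ≤ B.orthogonal (ker (g - 1)) := by
    refine le_orthogonal_self_of_forall_apply_self_eq_zero hB fun x hx ↦ ?_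
    by_contra hx'
    exact (hex x hx').1 (by simpa [sub_eq_zero] using hx)
  have hrange : range (g - 1) ≤ ker (g - 1) :=
    range_le_ker_iff.mpr (hex.sub_one_mul_self_eq_zero hB hnd hg hu)
  rw [ker_sub_one_eq_orthogonal_range hnd hg, orthogonal_orthogonal hnd hB.isRefl,
    ← ker_sub_one_eq_orthogonal_range hnd hg] at hker
  have := finrank_range_add_finrank_ker (g - 1)
  rw [le_antisymm hrange hker] at this
  exact ⟨_, this.symm⟩

lemma IsExceptional.isProdOfReflections [FiniteDimensional K V] {g : Module.End K V}
    (hex : B.IsExceptional g) (hB : B.IsSymm) (hnd : B.Nondegenerate) (hg : B.IsOrthogonal g)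
    {u : V} (hu : B u u ≠ 0)
    (hgood : ∀ h : Module.End K V, B.IsOrthogonal h → ¬ B.IsExceptional h →
      B.IsProdOfReflections (finrank K V) h) :
    B.IsProdOfReflections (finrank K V) g := by
  have hh : B.IsOrthogonal (B.reflection u * g) := fun x y ↦ by
    rw [Module.End.mul_apply, Module.End.mul_apply, isOrthogonal_reflection hB hu, hg]
  have hdet : (B.reflection u * g).det = -1 := by
    rw [map_mul, det_reflection hu, hex.det_eq_one hB hnd hg hu, mul_one]
  have hneg : (-1 : K) ≠ 1 := fun h ↦ (two_ne_zero : (2 : K) ≠ 0) (by linear_combination -h)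
  have hh_good : ¬ B.IsExceptional (B.reflection u * g) := fun hex' ↦
    hneg (hdet.symm.trans (hex'.det_eq_one hB hnd hh hu))
  obtain ⟨ws, hlen, hws, hprod⟩ := hgood _ hh hh_good
  have hodd : Odd ws.length := by
    rw [← neg_one_pow_eq_neg_one_iff_odd hneg, ← det_list_prod_reflection hws, ← hprod, hdet]
  obtain ⟨k, hk⟩ := hex.even_finrank hB hnd hg hu
  obtain ⟨l, hl⟩ := hodd
  exact (IsProdOfReflections.of_reflection_mul hu ⟨ws, le_rfl, hws, hprod⟩).mono (by omega)

theorem isProdOfReflections_finrank [FiniteDimensional K V] (hB : B.IsSymm)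
    (hnd : B.Nondegenerate) {g : Module.End K V} (hg : B.IsOrthogonal g) :
    B.IsProdOfReflections (finrank K V) g := by
  induction hd : finrank K V using Nat.strong_induction_on generalizing V with
  | _ d ih =>
  subst hd
  rcases subsingleton_or_nontrivial V with hV | hV
  · rw [Subsingleton.elim g 1]
    exact isProdOfReflections_one _
  have hB0 : B ≠ 0 := fun h0 ↦ by
    obtain ⟨x, hx⟩ := exists_ne (0 : V)
    exact hx (hnd.1 x fun y ↦ by simp [h0])
  obtain ⟨u, hu⟩ := exists_bilinForm_self_ne_zero (htwo := invertibleOfNonzero two_ne_zero) hB0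
    (isSymm_iff.mp hB)
  have ih_perp (v : V) (hv : B v v ≠ 0) (h : Module.End K (B.orthogonal (K ∙ v)))
      (hh : (B.restrict _).IsOrthogonal h) :
      (B.restrict _).IsProdOfReflections (finrank K V - 1) h := by
    have hW : finrank K (B.orthogonal (K ∙ v)) = finrank K V - 1 := by
      rw [finrank_orthogonal hnd, finrank_span_singleton fun h0 ↦ hv (by simp [h0])]
    exact hW ▸ ih _ (hW ▸ Nat.sub_one_lt finrank_pos.ne') (hB.restrict _)
      (restrict_nondegenerate_orthogonal_spanSingleton B hnd hB.isRefl hv) hh rfl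
  by_cases hex : B.IsExceptional g
  · exact hex.isProdOfReflections hB hnd hg hu fun _ hh hh' ↦
      isProdOfReflections_of_not_isExceptional hB ih_perp hh hh'
  · exact isProdOfReflections_of_not_isExceptional hB ih_perp hg hex

end LinearMap.BilinForm

lemma coe_list_prod_reflection {V : Type*} [AddCommGroup V] [Module ℝ V] (B : BilinForm ℝ V)
    (ws : List V) : ⇑(ws.map B.reflection).prod = (ws.map (reflVec B)).foldr (· ∘ ·) id := by
  induction ws with
  | nil => rfl
  | cons w ws ih =>
    rw [List.map_cons, List.prod_cons, Module.End.coe_mul, ih, List.map_cons, List.foldr_cons]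
    exact congrArg (· ∘ _) (funext (B.reflection_apply w))

/-- Cartan–Dieudonné: every isometry of a nondegenerate symmetric bilinear form on an
`(n+1)`-dimensional real vector space is a product of at most `n+1` reflections in
anisotropic vectors. -/
theorem stmt12 {V : Type*} [AddCommGroup V] [Module ℝ V] [FiniteDimensional ℝ V]
    {n : ℕ} (hdim : finrank ℝ V = n + 1)
    (B : BilinForm ℝ V) (hsymm : B.IsSymm) (hnd : B.Nondegenerate)
    (g : V →ₗ[ℝ] V) (hg : ∀ v w, B (g v) (g w) = B v w) :
    ∃ ws : List V, ws.length ≤ n + 1 ∧ (∀ w ∈ ws, B w w ≠ 0) ∧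
      ⇑g = (ws.map (reflVec B)).foldr (· ∘ ·) id := by
  obtain ⟨ws, hlen, hws, rfl⟩ := B.isProdOfReflections_finrank hsymm hnd hg
  exact ⟨ws, hdim ▸ hlen, hws, coe_list_prod_reflection B ws⟩
end
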